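/- Let k be a field of characteristic zero. The group G ≤ PGL₄(k) generated by the four matrices g₁ = [[0,-1,0,0],[1,-1,0,0],[0,0,1,0],[0,0,0,1]], g₂ = [[1,0,0,0],[0,1,0,0],[0,0,0,-1],[0,0,1,-1]], g₃ = permutation matrix of (x₀x₂)(x₁x₃) via (x₀:x₁:x₂:x₃) ↦ (x₂:x₃:x₁:x₀), and g₄ = reversal (x₀:x₁:x₂:x₃) ↦ (x₃:x₂:x₁:x₀), is isomorphic to C₃² ⋊ D₈ of order 72. -/

import Mathlib

/-!
All four matrices have integer entries, so the group can be built inside `GL₄(ℤ)`: `g₁, g₂` are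
commuting elements of order 3 spanning `C₃²`, while `g₃` (of order 4) and `g₄` (an involution)
span a copy of `D₈` normalising it, acting on `C₃²` by `(p, q) ↦ (q, -p)` and
`(p, q) ↦ (-q, -p)`. This gives a homomorphism `C₃² ⋊ D₈ → GL₄(ℤ) → PGL₄(k)` onto `G`. It is
injective: as `ℤ → k` is injective in characteristic zero, an element sent into the centre of
`GL₄(k)` is already central in `GL₄(ℤ)`, i.e. `±1`, and among the 72 integer matrices only the
identity is `±1`.
-/

open Function

theorem Subgroup.comap_center_le_center {G H : Type*} [Group G] [Group H] {f : G →* H}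
    (hf : Injective f) : (center H).comap f ≤ center G := fun g hg =>
  mem_center_iff.mpr fun h => hf <| by simp only [map_mul, mem_center_iff.mp hg (f h)]

theorem Matrix.GeneralLinearGroup.map_injective {n R S : Type*} [Fintype n] [DecidableEq n]
    [CommRing R] [CommRing S] {f : R →+* S} (hf : Injective f) : Injective (map (n := n) f) :=
  fun _ _ h => Units.ext <| Matrix.map_injective hf congr(Units.val $h)

namespace C3SqSemidirectD8

open Matrix SemidirectProduct

def A₁ : GL (Fin 4) ℤ :=
  Units.ofPowEqOne !![0, -1, 0, 0; 1, -1, 0, 0; 0, 0, 1, 0; 0, 0, 0, 1] 3 (by decide) (by decide)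
def A₂ : GL (Fin 4) ℤ :=
  Units.ofPowEqOne !![1, 0, 0, 0; 0, 1, 0, 0; 0, 0, 0, -1; 0, 0, 1, -1] 3 (by decide) (by decide)
def A₃ : GL (Fin 4) ℤ :=
  Units.ofPowEqOne !![0, 0, 1, 0; 0, 0, 0, 1; 0, 1, 0, 0; 1, 0, 0, 0] 4 (by decide) (by decide)
def A₄ : GL (Fin 4) ℤ :=
  Units.ofPowEqOne !![0, 0, 0, 1; 0, 0, 1, 0; 0, 1, 0, 0; 1, 0, 0, 0] 2 (by decide) (by decide)

abbrev C₃sq := Multiplicative (ZMod 3 × ZMod 3)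

def ofC₃sq : C₃sq →* GL (Fin 4) ℤ where
  toFun n := A₁ ^ n.toAdd.1.val * A₂ ^ n.toAdd.2.val
  map_one' := by decide
  map_mul' := by decide

def ofDihedral : DihedralGroup 4 →* GL (Fin 4) ℤ where
  toFun
    | .r i => A₃ ^ i.val
    | .sr i => A₄ * A₃ ^ i.val
  map_one' := by decide
  map_mul' := by decide

def rotation : C₃sq ≃* C₃sq := AddEquiv.toMultiplicative
  { toFun p := (p.2, -p.1)
    invFun p := (-p.2, p.1)
    left_inv _ := by simp
    right_inv _ := by simp
    map_add' _ _ := by simp [add_comm] }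

def reflection : C₃sq ≃* C₃sq := AddEquiv.toMultiplicative
  { toFun p := (-p.2, -p.1)
    invFun p := (-p.2, -p.1)
    left_inv _ := by simp
    right_inv _ := by simp
    map_add' _ _ := by simp [add_comm] }

def action : DihedralGroup 4 →* MulAut C₃sq where
  toFun
    | .r i => rotation ^ i.val
    | .sr i => reflection * rotation ^ i.val
  map_one' := rfl
  map_mul' g h := MulEquiv.ext fun n => by
    revert g h n
    decide

theorem ofC₃sq_action : ∀ (d : DihedralGroup 4) (n : C₃sq),
    ofC₃sq (action d n) = MulAut.conj (ofDihedral d) (ofC₃sq n) := by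
  decide

def toGL : C₃sq ⋊[action] DihedralGroup 4 →* GL (Fin 4) ℤ :=
  lift ofC₃sq ofDihedral fun d => MonoidHom.ext (ofC₃sq_action d)

theorem eq_one_of_scalar_eq : ∀ (n : C₃sq) (d : DihedralGroup 4) (u : ℤˣ),
    GeneralLinearGroup.scalar (Fin 4) u = ofC₃sq n * ofDihedral d → n = 1 ∧ d = 1 := by
  decide

theorem eq_one_of_toGL_mem_center {z : C₃sq ⋊[action] DihedralGroup 4}
    (hz : toGL z ∈ Subgroup.center (GL (Fin 4) ℤ)) : z = 1 := by
  rw [GeneralLinearGroup.center_eq_range_scalar] at hz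
  obtain ⟨u, hu⟩ := hz
  obtain ⟨hn, hd⟩ := eq_one_of_scalar_eq z.left z.right u hu
  exact SemidirectProduct.ext hn hd

theorem range_toGL : toGL.range = Subgroup.closure {A₁, A₂, A₃, A₄} := by
  apply le_antisymm
  · have mem : ∀ A ∈ ({A₁, A₂, A₃, A₄} : Set _), A ∈ Subgroup.closure {A₁, A₂, A₃, A₄} :=
      fun A hA => Subgroup.subset_closure hA
    rintro _ ⟨⟨n, d⟩, rfl⟩
    change (A₁ ^ _ * A₂ ^ _) * ofDihedral d ∈ _
    refine mul_mem (mul_mem (pow_mem (mem _ (by simp)) _) (pow_mem (mem _ (by simp)) _)) ?_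
    rcases d with i | i
    · exact pow_mem (mem _ (by simp)) _
    · exact mul_mem (mem _ (by simp)) (pow_mem (mem _ (by simp)) _)
  · obtain ⟨h₁, h₂, h₃, h₄⟩ : toGL (inl (.ofAdd (1, 0))) = A₁ ∧ toGL (inl (.ofAdd (0, 1))) = A₂ ∧
        toGL (inr (.r 1)) = A₃ ∧ toGL (inr (.sr 0)) = A₄ := by
      decide
    rw [Subgroup.closure_le]
    rintro _ (rfl | rfl | rfl | rfl)
    exacts [⟨_, h₁⟩, ⟨_, h₂⟩, ⟨_, h₃⟩, ⟨_, h₄⟩]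

variable (k : Type*) [CommRing k]

def castToPGL : GL (Fin 4) ℤ →* GL (Fin 4) k ⧸ Subgroup.center (GL (Fin 4) k) :=
  (QuotientGroup.mk' _).comp (GeneralLinearGroup.map (Int.castRingHom k))

def toPGL : C₃sq ⋊[action] DihedralGroup 4 →* GL (Fin 4) k ⧸ Subgroup.center (GL (Fin 4) k) :=
  (castToPGL k).comp toGL

theorem toPGL_injective [CharZero k] : Injective (toPGL k) := by
  refine (injective_iff_map_eq_one _).mpr fun z hz => eq_one_of_toGL_mem_center ?_
  refine Subgroup.comap_center_le_center
    (GeneralLinearGroup.map_injective (f := Int.castRingHom k) Int.cast_injective) ?_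
  exact (QuotientGroup.eq_one_iff (GeneralLinearGroup.map _ (toGL z))).mp hz

theorem range_toPGL : (toPGL k).range = Subgroup.closure (castToPGL k '' {A₁, A₂, A₃, A₄}) := by
  rw [toPGL, MonoidHom.range_comp, range_toGL, MonoidHom.map_closure]

theorem card_semidirectProduct : Nat.card (C₃sq ⋊[action] DihedralGroup 4) = 72 := by
  simp [SemidirectProduct.card, DihedralGroup.card]

end C3SqSemidirectD8

open C3SqSemidirectD8 in
theorem stmt11 (k : Type*) [Field k] [CharZero k]
    (g₁ g₂ g₃ g₄ : GL (Fin 4) k)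
    (h₁ : (g₁ : Matrix (Fin 4) (Fin 4) k) =
      !![0, -1, 0, 0; 1, -1, 0, 0; 0, 0, 1, 0; 0, 0, 0, 1])
    (h₂ : (g₂ : Matrix (Fin 4) (Fin 4) k) =
      !![1, 0, 0, 0; 0, 1, 0, 0; 0, 0, 0, -1; 0, 0, 1, -1])
    (h₃ : (g₃ : Matrix (Fin 4) (Fin 4) k) =
      !![0, 0, 1, 0; 0, 0, 0, 1; 0, 1, 0, 0; 1, 0, 0, 0])
    (h₄ : (g₄ : Matrix (Fin 4) (Fin 4) k) =
      !![0, 0, 0, 1; 0, 0, 1, 0; 0, 1, 0, 0; 1, 0, 0, 0])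
    (G : Subgroup (GL (Fin 4) k ⧸ Subgroup.center (GL (Fin 4) k)))
    (hG : G = Subgroup.closure
      {QuotientGroup.mk' (Subgroup.center (GL (Fin 4) k)) g₁,
       QuotientGroup.mk' (Subgroup.center (GL (Fin 4) k)) g₂,
       QuotientGroup.mk' (Subgroup.center (GL (Fin 4) k)) g₃,
       QuotientGroup.mk' (Subgroup.center (GL (Fin 4) k)) g₄}) :
    (∃ φ : DihedralGroup 4 →* MulAut (Multiplicative (ZMod 3 × ZMod 3)),
      Nonempty (G ≃* SemidirectProduct (Multiplicative (ZMod 3 × ZMod 3))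
        (DihedralGroup 4) φ)) ∧
    Nat.card G = 72 := by
  have cast_eq : ∀ {A : GL (Fin 4) ℤ} {g : GL (Fin 4) k},
      (A : Matrix (Fin 4) (Fin 4) ℤ).map (Int.cast : ℤ → k) = g →
        castToPGL k A = QuotientGroup.mk' _ g :=
    fun h => congrArg (QuotientGroup.mk' _) (Units.ext h)
  have hrange : (toPGL k).range = G := by
    rw [range_toPGL, hG, Set.image_insert_eq, Set.image_insert_eq, Set.image_pair,
      cast_eq (A := A₁) (by rw [h₁]; simp [A₁, ← Matrix.ext_iff, Fin.forall_fin_succ]),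
      cast_eq (A := A₂) (by rw [h₂]; simp [A₂, ← Matrix.ext_iff, Fin.forall_fin_succ]),
      cast_eq (A := A₃) (by rw [h₃]; simp [A₃, ← Matrix.ext_iff, Fin.forall_fin_succ]),
      cast_eq (A := A₄) (by rw [h₄]; simp [A₄, ← Matrix.ext_iff, Fin.forall_fin_succ])]
  let e : G ≃* C₃sq ⋊[action] DihedralGroup 4 :=
    (MulEquiv.subgroupCongr hrange.symm).trans (MonoidHom.ofInjective (toPGL_injective k)).symm
  exact ⟨⟨action, ⟨e⟩⟩, (Nat.card_congr e.toEquiv).trans card_semidirectProduct⟩
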